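/- If G' is d-embedded in G (both 2-terminal directed graphs), then the parallel width of G is at least the parallel width of G', and the serial-parallel width of G is at least the serial-parallel width of G'. -/

import Mathlib

variable {V : Type*}

/-- `p` is a simple directed path in the edge relation `E`. -/
def IsDiPath (E : V → V → Prop) (p : List V) : Prop := p.Chain' E ∧ p.Nodup

/-- `p` is a simple directed path from `x` to `y`. -/
def PathFrom (E : V → V → Prop) (p : List V) (x y : V) : Prop :=
  IsDiPath E p ∧ p.head? = some x ∧ p.getLast? = some y

/-- the edge `(a,b)` is traversed by the path `p`. -/
def EdgeOn (a b : V) (p : List V) : Prop := (a, b) ∈ p.zip p.tail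

/-- directed reachability. -/
def Reach (E : V → V → Prop) : V → V → Prop := Relation.ReflTransGen E

/-- no directed cycles. -/
def Acyclic (E : V → V → Prop) : Prop := ∀ a b, E a b → ¬ Reach E b a

/-- 2-terminal graph (edge version): no self-loops, some `s`-`t` path exists and
every edge lies on a simple `s`-`t` path. -/
def TwoTerminalE (E : V → V → Prop) (s t : V) : Prop :=
  (∀ v, ¬ E v v) ∧ (∃ p, PathFrom E p s t) ∧
  ∀ a b, E a b → ∃ p, PathFrom E p s t ∧ EdgeOn a b p

/-- 2-terminal graph (full version): no self-loops and every vertex and edge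
lies on a simple `s`-`t` path. -/
def TwoTerminalF (E : V → V → Prop) (s t : V) : Prop :=
  (∀ v, ¬ E v v) ∧ (∀ v, ∃ p, PathFrom E p s t ∧ v ∈ p) ∧
  ∀ a b, E a b → ∃ p, PathFrom E p s t ∧ EdgeOn a b p

/-- `C` is an `s`-`t` edge cut. -/
def IsCut (E : V → V → Prop) (s t : V) (C : Set (V × V)) : Prop :=
  (∀ e ∈ C, E e.1 e.2) ∧ ¬ ∃ p, PathFrom (fun a b => E a b ∧ (a, b) ∉ C) p s t

def IsMinCut (E : V → V → Prop) (s t : V) (C : Set (V × V)) : Prop :=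
  IsCut E s t C ∧ ∀ C' ⊂ C, ¬ IsCut E s t C'

/-- `S` is parallel: contained in some minimal `s`-`t` cut. -/
def Parallel (E : V → V → Prop) (s t : V) (S : Set (V × V)) : Prop :=
  ∃ C, IsMinCut E s t C ∧ S ⊆ C

/-- `S` is serial: contained in a simple directed `s`-`t` path. -/
def Serial (E : V → V → Prop) (s t : V) (S : Set (V × V)) : Prop :=
  ∃ p, PathFrom E p s t ∧ ∀ e ∈ S, EdgeOn e.1 e.2 p

/-- Forward split of node `a` into `a, b` with new edge `(a,b)`: `a` keeps all incoming
edges, `b` takes the outgoing edges in `Out` (nonempty), `a` keeps the rest.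
`b` must be a fresh (isolated) vertex of the original graph `E`; `E₂` is the result. -/
def ForwardSplit (E E₂ : V → V → Prop) (a b : V) (Out : Set V) : Prop :=
  (∀ v, ¬ E b v ∧ ¬ E v b) ∧ a ≠ b ∧ Out.Nonempty ∧ (∀ v ∈ Out, E a v) ∧ b ∉ Out ∧
  ∀ u v, E₂ u v ↔ ((u = a ∧ v = b) ∨ (u = b ∧ v ∈ Out) ∨
    (u = a ∧ v ∉ Out ∧ v ≠ b ∧ E a v) ∨ (u ≠ a ∧ u ≠ b ∧ v ≠ b ∧ E u v))

/-- Backward split of node `b` into `a, b` with new edge `(a,b)`: `b` keeps all outgoing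
edges, `a` takes the incoming edges in `In` (nonempty), `b` keeps the rest.
`a` must be a fresh (isolated) vertex of the original graph `E`; `E₂` is the result. -/
def BackwardSplit (E E₂ : V → V → Prop) (a b : V) (In : Set V) : Prop :=
  (∀ v, ¬ E a v ∧ ¬ E v a) ∧ a ≠ b ∧ In.Nonempty ∧ (∀ u ∈ In, E u b) ∧ a ∉ In ∧
  ∀ u v, E₂ u v ↔ ((u = a ∧ v = b) ∨ (u ∈ In ∧ v = a) ∨
    (u ∉ In ∧ u ≠ a ∧ v = b ∧ E u b) ∨ (u ≠ a ∧ v ≠ a ∧ v ≠ b ∧ E u v))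

/-- Addition of a new edge `(a,b)` such that there is no path from `b` to `a`. -/
def AddEdgeStep (E E₂ : V → V → Prop) : Prop :=
  ∃ a b, ¬ Reach E b a ∧ ∀ u v, E₂ u v ↔ (E u v ∨ (u = a ∧ v = b))

/-- A single d-embedding operation (for 2-terminal graphs with terminals `s`, `t`). -/
def DEmbedStep (s t : V) (E E₂ : V → V → Prop) : Prop :=
  AddEdgeStep E E₂ ∨ (∃ a b Out, a ≠ t ∧ ForwardSplit E E₂ a b Out) ∨
    (∃ a b In, b ≠ s ∧ BackwardSplit E E₂ a b In)

/-- `G'` is d-embedded in `G` if `G` is obtained from `G'` by a sequence of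
d-embedding operations. -/
def DEmbedded (s t : V) (E' E : V → V → Prop) : Prop :=
  Relation.ReflTransGen (DEmbedStep s t) E' E

/-!
Each d-embedding operation comes with a map on edges, injective on the old edges, that carries
every minimal `s`-`t` cut into a minimal cut of the new graph and the edges of every simple
`s`-`t` path into those of a simple path; so every (serial-)parallel set has a (serial-)parallel image of
the same size, and both widths can only grow along the sequence of operations.

Cuts are handled through reachability. Adding `(a, b)` keeps a minimal cut `C`, extended by
`(a, b)` when `C` still lets `s` reach `a` and `b` reach `t`. A forward split at `a` moves the
edges `(a, v)`, `v ∈ Out`, to `(b, v)`: walks of the old graph lift through the new edge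
`(a, b)`, and walks of the new graph project back by merging `b` into `a`. A backward split is
a forward split of the reversed graph.
-/

open Relation

section Paths
variable {R R' : V → V → Prop} {p l₁ l₂ : List V} {u v x y : V}

theorem edgeOn_cons_cons : EdgeOn u v (x :: y :: p) ↔ (u = x ∧ v = y) ∨ EdgeOn u v (y :: p) := by
  simp [EdgeOn]

theorem edgeOn_append_cons :
    EdgeOn u v (l₁ ++ x :: l₂) ↔ EdgeOn u v (l₁ ++ [x]) ∨ EdgeOn u v (x :: l₂) := by
  induction l₁ with
  | nil => simp [EdgeOn]
  | cons w l ih =>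
    rcases l with _ | ⟨w', l⟩
    · simp [EdgeOn]
    · simp only [List.cons_append, edgeOn_cons_cons] at ih ⊢
      rw [ih]
      tauto

theorem edgeOn_iff_exists_append : EdgeOn u v p ↔ ∃ l₁ l₂, p = l₁ ++ u :: v :: l₂ := by
  refine ⟨fun h => ?_, ?_⟩
  · induction p using List.twoStepInduction with
    | nil | singleton => simp [EdgeOn] at h
    | cons_cons x y r _ ih =>
      rcases edgeOn_cons_cons.1 h with ⟨rfl, rfl⟩ | h
      · exact ⟨[], r, rfl⟩
      · obtain ⟨l₁, l₂, hl⟩ := ih y h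
        exact ⟨x :: l₁, l₂, by rw [hl]; rfl⟩
  · rintro ⟨l₁, l₂, rfl⟩
    rw [edgeOn_append_cons, edgeOn_cons_cons]
    simp

theorem edgeOn_subdivide {w : V} :
    EdgeOn u v (l₁ ++ x :: w :: y :: l₂) ↔
      EdgeOn u v (l₁ ++ [x]) ∨ (u = x ∧ v = w) ∨ (u = w ∧ v = y) ∨ EdgeOn u v (y :: l₂) := by
  rw [edgeOn_append_cons, edgeOn_cons_cons, edgeOn_cons_cons]

theorem EdgeOn.mem_of_append_singleton (h : EdgeOn u v (l₁ ++ [x])) : u ∈ l₁ := by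
  induction l₁ with
  | nil => simp [EdgeOn] at h
  | cons w l ih =>
    rcases l with _ | ⟨w', l⟩
    · simp [EdgeOn] at h; simp [h.1]
    · rcases edgeOn_cons_cons.1 h with ⟨rfl, -⟩ | h
      · exact List.mem_cons_self
      · exact List.mem_cons_of_mem _ (ih h)

theorem EdgeOn.mem_left (h : EdgeOn u v p) : u ∈ p :=
  (List.of_mem_zip h).1

theorem EdgeOn.reverse (h : EdgeOn u v p) : EdgeOn v u p.reverse := by
  obtain ⟨l₁, l₂, rfl⟩ := edgeOn_iff_exists_append.1 h
  exact edgeOn_iff_exists_append.2 ⟨l₂.reverse, l₁.reverse, by simp⟩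

theorem isChain_iff_forall_edgeOn : p.IsChain R ↔ ∀ u v, EdgeOn u v p → R u v := by
  simp only [List.isChain_iff_forall_rel_of_append_cons_cons, edgeOn_iff_exists_append]
  grind

theorem reflTransGen_of_isChain (hc : p.IsChain R) (hx : p.head? = some x)
    (hy : p.getLast? = some y) : ReflTransGen R x y := by
  obtain ⟨r, rfl⟩ := List.head?_eq_some_iff.1 hx
  exact List.relationReflTransGen_of_exists_isChain_cons r hc (List.getLast_of_mem_getLast? hy)

theorem PathFrom.mono (h : ∀ u v, R u v → R' u v) (hp : PathFrom R p x y) : PathFrom R' p x y :=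
  ⟨⟨hp.1.1.imp h, hp.1.2⟩, hp.2⟩

theorem PathFrom.reverse (hp : PathFrom R p x y) : PathFrom (flip R) p.reverse y x :=
  ⟨⟨List.isChain_reverse.2 hp.1.1, List.nodup_reverse.2 hp.1.2⟩,
    by simpa using hp.2.2, by simpa using hp.2.1⟩

theorem PathFrom.reflTransGen_of_mem (hp : PathFrom R p x y) (hv : v ∈ p) :
    ReflTransGen R x v ∧ ReflTransGen R v y := by
  obtain ⟨l₁, l₂, rfl⟩ := List.append_of_mem hv
  obtain ⟨hc₁, hc₂⟩ := List.isChain_split.1 hp.1.1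
  refine ⟨reflTransGen_of_isChain hc₁ ?_ (by simp), reflTransGen_of_isChain hc₂ rfl ?_⟩
  · rw [← hp.2.1]; cases l₁ <;> simp
  · rw [← hp.2.2, List.getLast?_append_of_ne_nil _ (List.cons_ne_nil _ _)]

theorem exists_pathFrom_iff : (∃ p, PathFrom R p x y) ↔ ReflTransGen R x y := by
  refine ⟨fun ⟨p, hp⟩ => reflTransGen_of_isChain hp.1.1 hp.2.1 hp.2.2, fun h => ?_⟩
  induction h using ReflTransGen.head_induction_on with
  | refl => exact ⟨[y], ⟨⟨List.isChain_singleton _, List.nodup_singleton _⟩, rfl, rfl⟩⟩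
  | @head x z hxz _ ih =>
    obtain ⟨p, hp⟩ := ih
    -- a walk returning to `x` is shortcut there
    by_cases hx : x ∈ p
    · obtain ⟨l₁, l₂, rfl⟩ := List.append_of_mem hx
      refine ⟨x :: l₂, ⟨hp.1.1.right_of_append, hp.1.2.of_append_right⟩, rfl, ?_⟩
      rw [← hp.2.2, List.getLast?_append_of_ne_nil _ (List.cons_ne_nil _ _)]
    · obtain ⟨r, rfl⟩ := List.head?_eq_some_iff.1 hp.2.1
      refine ⟨x :: z :: r, ⟨List.isChain_cons_cons.2 ⟨hxz, hp.1.1⟩, List.nodup_cons.2 ⟨hx, hp.1.2⟩⟩,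
        rfl, ?_⟩
      rw [List.getLast?_cons_cons]
      exact hp.2.2

end Paths

section Cuts
variable {E : V → V → Prop} {s t x y : V} {C D : Set (V × V)}

def deleteEdges (E : V → V → Prop) (D : Set (V × V)) : V → V → Prop :=
  fun u v => E u v ∧ (u, v) ∉ D

theorem Relation.ReflTransGen.deleteEdges_anti (hD : D ⊆ C)
    (h : ReflTransGen (deleteEdges E C) x y) : ReflTransGen (deleteEdges E D) x y :=
  ReflTransGen.mono (fun _ _ huv => ⟨huv.1, fun hm => huv.2 (hD hm)⟩) _ _ h

theorem Relation.ReflTransGen.deleteEdges_mono {E₂ : V → V → Prop} (hE : ∀ u v, E u v → E₂ u v)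
    (h : ReflTransGen (deleteEdges E D) x y) : ReflTransGen (deleteEdges E₂ D) x y :=
  ReflTransGen.mono (fun u v huv => ⟨hE u v huv.1, huv.2⟩) _ _ h

theorem isCut_iff :
    IsCut E s t C ↔ (∀ e ∈ C, E e.1 e.2) ∧ ¬ ReflTransGen (deleteEdges E C) s t := by
  rw [IsCut, ← exists_pathFrom_iff]
  rfl

theorem isMinCut_iff :
    IsMinCut E s t C ↔ IsCut E s t C ∧ ∀ e ∈ C, ReflTransGen (deleteEdges E (C \ {e})) s t := by
  refine and_congr_right fun hC => ⟨fun hmin e he => ?_, fun hw C' hC' hcut => ?_⟩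
  · by_contra h
    exact hmin _ (Set.sdiff_singleton_ssubset.2 he)
      (isCut_iff.2 ⟨fun f hf => hC.1 f hf.1, h⟩)
  · obtain ⟨e, heC, heC'⟩ := Set.exists_of_ssubset hC'
    have hsub : C' ⊆ C \ {e} := fun f hf => ⟨hC'.subset hf, by rintro rfl; exact heC' hf⟩
    exact (isCut_iff.1 hcut).2 ((hw e heC).deleteEdges_anti hsub)

theorem IsCut.ne (h : IsCut E s t C) : s ≠ t := by
  rintro rfl
  exact (isCut_iff.1 h).2 ReflTransGen.refl

theorem reflTransGen_deleteEdges_sInter {c : Set (Set (V × V))} (hc : IsChain (· ⊆ ·) c)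
    (hne : c.Nonempty) (h : ReflTransGen (deleteEdges E (⋂₀ c)) x y) :
    ∃ D ∈ c, ReflTransGen (deleteEdges E D) x y := by
  induction h with
  | refl => exact ⟨hne.some, hne.some_mem, ReflTransGen.refl⟩
  | @tail z w _ hzw ih =>
    obtain ⟨D₁, hD₁, h₁⟩ := ih
    obtain ⟨D₂, hD₂, hzwD₂⟩ : ∃ D₂ ∈ c, (z, w) ∉ D₂ := by
      simpa [Set.mem_sInter] using hzw.2
    rcases hc.total hD₁ hD₂ with h₁₂ | h₂₁
    · exact ⟨D₁, hD₁, h₁.tail ⟨hzw.1, fun hm => hzwD₂ (h₁₂ hm)⟩⟩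
    · exact ⟨D₂, hD₂, (h₁.deleteEdges_anti h₂₁).tail ⟨hzw.1, hzwD₂⟩⟩

/-- Zorn: a path uses finitely many edges, so the intersection of a chain of cuts is a cut. -/
theorem IsCut.exists_isMinCut_subset (h : IsCut E s t C) : ∃ C' ⊆ C, IsMinCut E s t C' := by
  obtain ⟨m, hm⟩ := zorn_superset {D | IsCut E s t D ∧ D ⊆ C} fun c hcS hc => by
    rcases c.eq_empty_or_nonempty with rfl | hne
    · exact ⟨C, ⟨h, subset_rfl⟩, by simp⟩
    refine ⟨⋂₀ c, ⟨isCut_iff.2 ⟨fun e he => (hcS hne.some_mem).1.1 e (he _ hne.some_mem), ?_⟩,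
      (Set.sInter_subset_of_mem hne.some_mem).trans (hcS hne.some_mem).2⟩,
      fun D hD => Set.sInter_subset_of_mem hD⟩
    intro hst
    obtain ⟨D, hD, hreach⟩ := reflTransGen_deleteEdges_sInter hc hne hst
    exact (isCut_iff.1 (hcS hD).1).2 hreach
  exact ⟨m, hm.prop.2, hm.prop.1, fun C' hC' hcut =>
    hC'.not_subset (hm.2 ⟨hcut, hC'.subset.trans hm.prop.2⟩ hC'.subset)⟩

theorem exists_isMinCut (hst : s ≠ t) : ∃ C, IsMinCut E s t C := by
  have hcut : IsCut E s t {e | E e.1 e.2} := by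
    refine isCut_iff.2 ⟨fun _ he => he, fun h => ?_⟩
    rcases h.cases_head with h | ⟨_, huv, _⟩
    · exact hst h
    · exact huv.2 huv.1
  obtain ⟨C, -, hC⟩ := hcut.exists_isMinCut_subset
  exact ⟨C, hC⟩

end Cuts

section Widths
variable {E E₂ F : V → V → Prop} {s t : V}

/-- `PW E ≤ PW E₂` and `SPW E ≤ SPW E₂`, witnessed set by set. -/
def WidthsLE (s t : V) (E E₂ : V → V → Prop) : Prop :=
  (∀ S : Finset (V × V), Parallel E s t ↑S →
      ∃ T : Finset (V × V), Parallel E₂ s t ↑T ∧ S.card ≤ T.card) ∧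
    (∀ S : Finset (V × V), Serial E s t ↑S → Parallel E s t ↑S →
      ∃ T : Finset (V × V), Serial E₂ s t ↑T ∧ Parallel E₂ s t ↑T ∧ S.card ≤ T.card)

theorem WidthsLE.refl : WidthsLE s t E E :=
  ⟨fun S h => ⟨S, h, le_rfl⟩, fun S h₁ h₂ => ⟨S, h₁, h₂, le_rfl⟩⟩

theorem WidthsLE.trans (h₁ : WidthsLE s t E F) (h₂ : WidthsLE s t F E₂) : WidthsLE s t E E₂ := by
  refine ⟨fun S hS => ?_, fun S hS₁ hS₂ => ?_⟩
  · obtain ⟨T, hT, hST⟩ := h₁.1 S hS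
    obtain ⟨U, hU, hTU⟩ := h₂.1 T hT
    exact ⟨U, hU, hST.trans hTU⟩
  · obtain ⟨T, hT₁, hT₂, hST⟩ := h₁.2 S hS₁ hS₂
    obtain ⟨U, hU₁, hU₂, hTU⟩ := h₂.2 T hT₁ hT₂
    exact ⟨U, hU₁, hU₂, hST.trans hTU⟩

theorem widthsLE_of_map (φ : V × V → V × V) (hφ : Set.InjOn φ {e | E e.1 e.2})
    (hcut : ∀ C, IsMinCut E s t C → C.Nonempty → ∃ C₂, IsMinCut E₂ s t C₂ ∧ φ '' C ⊆ C₂)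
    (hser : s ≠ t → ∀ S, Serial E s t S → Serial E₂ s t (φ '' S)) : WidthsLE s t E E₂ := by
  classical
  have hpar : ∀ S, Parallel E s t S → Parallel E₂ s t (φ '' S) := by
    rintro S ⟨C, hC, hSC⟩
    rcases C.eq_empty_or_nonempty with rfl | hne
    · obtain ⟨C₂, hC₂⟩ := exists_isMinCut (E := E₂) hC.1.ne
      exact ⟨C₂, hC₂, by simp [Set.subset_empty_iff.1 hSC]⟩
    · obtain ⟨C₂, hC₂, hφC⟩ := hcut C hC hne
      exact ⟨C₂, hC₂, (Set.image_mono hSC).trans hφC⟩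
  have hcard : ∀ S : Finset (V × V), Parallel E s t ↑S → S.card ≤ (S.image φ).card := by
    rintro S ⟨C, hC, hSC⟩
    exact (Finset.card_image_of_injOn (hφ.mono (hSC.trans hC.1.1))).ge
  refine ⟨fun S hS => ⟨S.image φ, ?_, hcard S hS⟩,
    fun S hS₁ hS₂ => ⟨S.image φ, ?_, ?_, hcard S hS₂⟩⟩ <;> rw [Finset.coe_image]
  · exact hpar _ hS
  · obtain ⟨C, hC, -⟩ := hS₂
    exact hser hC.1.ne _ hS₁
  · exact hpar _ hS₂

end Widths

section Reverse
variable {E E₂ : V → V → Prop} {s t : V} {C S : Set (V × V)}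

theorem deleteEdges_flip (E : V → V → Prop) (D : Set (V × V)) :
    deleteEdges (flip E) (Prod.swap '' D) = flip (deleteEdges E D) := by
  ext u v
  simp [deleteEdges, flip]

theorem IsMinCut.flip (h : IsMinCut E s t C) : IsMinCut (flip E) t s (Prod.swap '' C) := by
  rw [isMinCut_iff, isCut_iff] at h ⊢
  obtain ⟨⟨hCE, hcut⟩, hmin⟩ := h
  refine ⟨⟨?_, ?_⟩, ?_⟩
  · rintro _ ⟨e, he, rfl⟩
    exact hCE e he
  · rw [deleteEdges_flip]
    exact fun h => hcut (reflTransGen_swap.1 h)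
  · rintro _ ⟨e, he, rfl⟩
    rw [← Set.image_singleton, ← Set.image_sdiff Prod.swap_injective, deleteEdges_flip]
    exact reflTransGen_swap.2 (hmin e he)

theorem Parallel.flip (h : Parallel E s t S) : Parallel (flip E) t s (Prod.swap '' S) := by
  obtain ⟨C, hC, hSC⟩ := h
  exact ⟨_, hC.flip, Set.image_mono hSC⟩

theorem Serial.flip (h : Serial E s t S) : Serial (flip E) t s (Prod.swap '' S) := by
  obtain ⟨p, hp, hS⟩ := h
  exact ⟨p.reverse, hp.reverse, by rintro _ ⟨e, he, rfl⟩; exact (hS e he).reverse⟩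

theorem WidthsLE.of_flip (h : WidthsLE t s (flip E) (flip E₂)) : WidthsLE s t E E₂ := by
  classical
  have hcard (S : Finset (V × V)) : (S.image Prod.swap).card = S.card :=
    Finset.card_image_of_injective S Prod.swap_injective
  refine ⟨fun S hS => ?_, fun S hS₁ hS₂ => ?_⟩
  · obtain ⟨T, hT, hST⟩ := h.1 (S.image Prod.swap) (by rw [Finset.coe_image]; exact hS.flip)
    refine ⟨T.image Prod.swap, by rw [Finset.coe_image]; exact hT.flip, ?_⟩
    rwa [hcard, ← hcard S]
  · obtain ⟨T, hT₁, hT₂, hST⟩ := h.2 (S.image Prod.swap)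
      (by rw [Finset.coe_image]; exact hS₁.flip) (by rw [Finset.coe_image]; exact hS₂.flip)
    refine ⟨T.image Prod.swap, by rw [Finset.coe_image]; exact hT₁.flip,
      by rw [Finset.coe_image]; exact hT₂.flip, ?_⟩
    rwa [hcard, ← hcard S]

end Reverse

section AddEdge
variable {E E₂ R R' : V → V → Prop} {s t a b x y : V} {C : Set (V × V)}

theorem reflTransGen_or_of_le_sup_edge (h : ∀ u v, R' u v → R u v ∨ (u = a ∧ v = b))
    (hxy : ReflTransGen R' x y) :
    ReflTransGen R x y ∨ (ReflTransGen R x a ∧ ReflTransGen R b y) := by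
  induction hxy with
  | refl => exact Or.inl ReflTransGen.refl
  | @tail z w _ hzw ih =>
    rcases h z w hzw with hR | ⟨rfl, rfl⟩
    · exact ih.imp (·.tail hR) (And.imp_right (·.tail hR))
    · exact Or.inr ⟨ih.elim id And.left, ReflTransGen.refl⟩

theorem isMinCut_insert_of_addEdge (hE₂ : ∀ u v, E₂ u v ↔ E u v ∨ (u = a ∧ v = b))
    (hab : ¬ E a b) (hC : IsMinCut E s t C)
    (hsa : ReflTransGen (deleteEdges E C) s a) (hbt : ReflTransGen (deleteEdges E C) b t) :
    IsMinCut E₂ s t (insert (a, b) C) := by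
  have hE : ∀ u v, E u v → E₂ u v := fun u v h => (hE₂ u v).2 (Or.inl h)
  rw [isMinCut_iff, isCut_iff] at hC ⊢
  obtain ⟨⟨hCE, hcut⟩, hmin⟩ := hC
  have habC : (a, b) ∉ C := fun h => hab (hCE _ h)
  refine ⟨⟨?_, fun h => hcut (ReflTransGen.mono ?_ _ _ h)⟩, ?_⟩
  · rintro e (rfl | he)
    exacts [(hE₂ _ _).2 (Or.inr ⟨rfl, rfl⟩), hE _ _ (hCE e he)]
  · rintro u v ⟨huv, hm⟩
    refine ⟨((hE₂ u v).1 huv).resolve_right ?_, fun h => hm (Set.mem_insert_of_mem _ h)⟩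
    rintro ⟨rfl, rfl⟩
    exact hm (Set.mem_insert _ _)
  · rintro e (rfl | he)
    · rw [Set.insert_sdiff_self_of_notMem habC]
      exact (hsa.deleteEdges_mono hE).trans <|
        .head ⟨(hE₂ _ _).2 (Or.inr ⟨rfl, rfl⟩), habC⟩ (hbt.deleteEdges_mono hE)
    · refine ReflTransGen.mono (fun u v huv => ⟨hE _ _ huv.1, ?_⟩) _ _ (hmin e he)
      rintro ⟨huab | huC, hne⟩
      · obtain ⟨rfl, rfl⟩ := Prod.mk.inj huab
        exact hab huv.1
      · exact huv.2 ⟨huC, hne⟩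

theorem isMinCut_of_addEdge (hE₂ : ∀ u v, E₂ u v ↔ E u v ∨ (u = a ∧ v = b))
    (hC : IsMinCut E s t C)
    (hpass : ¬ (ReflTransGen (deleteEdges E C) s a ∧ ReflTransGen (deleteEdges E C) b t)) :
    IsMinCut E₂ s t C := by
  have hE : ∀ u v, E u v → E₂ u v := fun u v h => (hE₂ u v).2 (Or.inl h)
  rw [isMinCut_iff, isCut_iff] at hC ⊢
  obtain ⟨⟨hCE, hcut⟩, hmin⟩ := hC
  refine ⟨⟨fun e he => hE _ _ (hCE e he), fun h => ?_⟩,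
    fun e he => (hmin e he).deleteEdges_mono hE⟩
  refine (reflTransGen_or_of_le_sup_edge (fun u v huv => ?_) h).elim hcut hpass
  rcases (hE₂ u v).1 huv.1 with h | h
  exacts [Or.inl ⟨h, huv.2⟩, Or.inr h]

theorem exists_isMinCut_superset_of_addEdge (hE₂ : ∀ u v, E₂ u v ↔ E u v ∨ (u = a ∧ v = b))
    (hC : IsMinCut E s t C) : ∃ C₂, IsMinCut E₂ s t C₂ ∧ C ⊆ C₂ := by
  by_cases hab : E a b
  · obtain rfl : E₂ = E := by
      ext u v
      rw [hE₂, or_iff_left_iff_imp]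
      rintro ⟨rfl, rfl⟩
      exact hab
    exact ⟨C, hC, subset_rfl⟩
  by_cases hpass : ReflTransGen (deleteEdges E C) s a ∧ ReflTransGen (deleteEdges E C) b t
  · exact ⟨_, isMinCut_insert_of_addEdge hE₂ hab hC hpass.1 hpass.2, Set.subset_insert _ _⟩
  · exact ⟨C, isMinCut_of_addEdge hE₂ hC hpass, subset_rfl⟩

theorem AddEdgeStep.widthsLE (h : AddEdgeStep E E₂) : WidthsLE s t E E₂ := by
  obtain ⟨a, b, -, hE₂⟩ := h
  refine widthsLE_of_map id (Set.injOn_id _)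
    (fun C hC _ => by simpa using exists_isMinCut_superset_of_addEdge hE₂ hC) ?_
  rintro - S ⟨p, hp, hS⟩
  exact ⟨p, hp.mono fun u v h => (hE₂ u v).2 (Or.inl h), by simpa using hS⟩

end AddEdge

section ForwardSplit
variable {E E₂ : V → V → Prop} {a b : V} {Out : Set V} {s t x y : V} {p : List V}
  {C D : Set (V × V)}

open Classical in
noncomputable def splitEdge (a b : V) (Out : Set V) (e : V × V) : V × V :=
  if e.1 = a ∧ e.2 ∈ Out then (b, e.2) else e

open Classical in
noncomputable def mergeVertex (a b : V) (v : V) : V :=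
  if v = b then a else v

theorem ForwardSplit.rel_of_rel (hF : ForwardSplit E E₂ a b Out) {u v : V} (h : E u v)
    (hu : u = a → v ∉ Out) : E₂ u v := by
  obtain ⟨hb, -, -, -, -, hE₂⟩ := hF
  have hub : u ≠ b := by rintro rfl; exact (hb v).1 h
  have hvb : v ≠ b := by rintro rfl; exact (hb u).2 h
  by_cases hua : u = a
  · subst hua
    exact (hE₂ _ _).2 (Or.inr (Or.inr (Or.inl ⟨rfl, hu rfl, hvb, h⟩)))
  · exact (hE₂ _ _).2 (Or.inr (Or.inr (Or.inr ⟨hua, hub, hvb, h⟩)))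

theorem ForwardSplit.rel_splitEdge (hF : ForwardSplit E E₂ a b Out) {e : V × V}
    (he : E e.1 e.2) : E₂ (splitEdge a b Out e).1 (splitEdge a b Out e).2 := by
  unfold splitEdge
  split_ifs with h
  · exact (hF.2.2.2.2.2 _ _).2 (Or.inr (Or.inl ⟨rfl, h.2⟩))
  · exact hF.rel_of_rel he fun hu hv => h ⟨hu, hv⟩

theorem ForwardSplit.splitEdge_ne (hF : ForwardSplit E E₂ a b Out) {e : V × V}
    (he : E e.1 e.2) : splitEdge a b Out e ≠ (a, b) := by
  unfold splitEdge
  split_ifs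
  · exact fun h => hF.2.1 (Prod.mk.inj h).1.symm
  · rintro rfl
    exact (hF.1 a).2 he

theorem ForwardSplit.mergeVertex_splitEdge (hF : ForwardSplit E E₂ a b Out) {e : V × V}
    (he : E e.1 e.2) :
    (mergeVertex a b (splitEdge a b Out e).1, mergeVertex a b (splitEdge a b Out e).2) = e := by
  have h₁ : e.1 ≠ b := fun h => (hF.1 e.2).1 (h ▸ he)
  have h₂ : e.2 ≠ b := fun h => (hF.1 e.1).2 (h ▸ he)
  unfold splitEdge
  split_ifs with h
  · simp [mergeVertex, h₂, ← h.1]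
  · simp [mergeVertex, h₁, h₂]

theorem ForwardSplit.injOn_splitEdge (hF : ForwardSplit E E₂ a b Out) :
    Set.InjOn (splitEdge a b Out) {e | E e.1 e.2} :=
  Set.LeftInvOn.injOn (f₁' := fun f => (mergeVertex a b f.1, mergeVertex a b f.2))
    fun _ he => hF.mergeVertex_splitEdge he

theorem ForwardSplit.splitEdge_mergeVertex (hF : ForwardSplit E E₂ a b Out) {u v : V}
    (h : E₂ u v) (hne : (u, v) ≠ (a, b)) :
    E (mergeVertex a b u) (mergeVertex a b v) ∧
      splitEdge a b Out (mergeVertex a b u, mergeVertex a b v) = (u, v) := by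
  obtain ⟨-, hab, -, hOutE, hbOut, hE₂⟩ := hF
  rcases (hE₂ u v).1 h with ⟨rfl, rfl⟩ | ⟨hu, hv⟩ | ⟨hu, hv, hvb, hE⟩ | ⟨hua, hub, hvb, hE⟩
  · exact absurd rfl hne
  · subst u
    have hvb : v ≠ b := fun h => hbOut (h ▸ hv)
    simp [mergeVertex, splitEdge, hvb, hv, hOutE v hv]
  · subst u
    simp [mergeVertex, splitEdge, hvb, hv, hab, hE]
  · simp [mergeVertex, splitEdge, hub, hvb, hua, hE]

theorem ForwardSplit.reflTransGen_lift (hF : ForwardSplit E E₂ a b Out)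
    (hD : ∀ e ∈ D, E e.1 e.2) (h : ReflTransGen (deleteEdges E D) x y) :
    ReflTransGen (deleteEdges E₂ (splitEdge a b Out '' D)) x y := by
  induction h with
  | refl => exact ReflTransGen.refl
  | @tail z w _ hzw ih =>
    have hnot : splitEdge a b Out (z, w) ∉ splitEdge a b Out '' D := fun hm =>
      hzw.2 ((hF.injOn_splitEdge.mem_image_iff hD hzw.1).1 hm)
    by_cases hz : z = a ∧ w ∈ Out
    · obtain ⟨hza, hw⟩ := hz
      subst z
      have hab : (a, b) ∉ splitEdge a b Out '' D := by
        rintro ⟨e, he, hab⟩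
        exact hF.splitEdge_ne (hD e he) hab
      refine (ih.tail ⟨(hF.2.2.2.2.2 _ _).2 (Or.inl ⟨rfl, rfl⟩), hab⟩).tail
        ⟨(hF.2.2.2.2.2 _ _).2 (Or.inr (Or.inl ⟨rfl, hw⟩)), ?_⟩
      simpa [splitEdge, hw] using hnot
    · refine ih.tail ⟨hF.rel_of_rel hzw.1 fun hza hw => hz ⟨hza, hw⟩, ?_⟩
      simpa [splitEdge, hz] using hnot

theorem ForwardSplit.reflTransGen_merge (hF : ForwardSplit E E₂ a b Out)
    (h : ReflTransGen (deleteEdges E₂ (splitEdge a b Out '' D)) x y) :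
    ReflTransGen (deleteEdges E D) (mergeVertex a b x) (mergeVertex a b y) := by
  induction h with
  | refl => exact ReflTransGen.refl
  | @tail z w _ hzw ih =>
    by_cases hab : (z, w) = (a, b)
    · obtain ⟨rfl, rfl⟩ := Prod.mk.inj hab
      simpa [mergeVertex, hF.2.1] using ih
    · obtain ⟨hE, hsplit⟩ := hF.splitEdge_mergeVertex hzw.1 hab
      exact ih.tail ⟨hE, fun hm => hzw.2 (hsplit ▸ Set.mem_image_of_mem _ hm)⟩

theorem ForwardSplit.isMinCut_image (hF : ForwardSplit E E₂ a b Out) (hbs : b ≠ s) (hbt : b ≠ t)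
    (hC : IsMinCut E s t C) : IsMinCut E₂ s t (splitEdge a b Out '' C) := by
  rw [isMinCut_iff, isCut_iff] at hC ⊢
  obtain ⟨⟨hCE, hcut⟩, hmin⟩ := hC
  refine ⟨⟨?_, fun h => hcut ?_⟩, ?_⟩
  · rintro _ ⟨e, he, rfl⟩
    exact hF.rel_splitEdge (hCE e he)
  · simpa [mergeVertex, hbs.symm, hbt.symm] using hF.reflTransGen_merge h
  · rintro _ ⟨e, he, rfl⟩
    rw [← Set.image_singleton,
      ← (hF.injOn_splitEdge.mono hCE).image_sdiff_subset (Set.singleton_subset_iff.2 he)]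
    exact hF.reflTransGen_lift (fun f hf => hCE f hf.1) (hmin e he)

theorem ForwardSplit.eq_of_reflTransGen (hF : ForwardSplit E E₂ a b Out)
    (h : ReflTransGen E x y) (hxy : x = b ∨ y = b) : x = y := by
  rcases hxy with rfl | rfl
  · rcases h.cases_head with h | ⟨c, hc, -⟩
    exacts [h, absurd hc (hF.1 c).1]
  · rcases h.cases_tail with h | ⟨c, -, hc⟩
    exacts [h.symm, absurd hc (hF.1 c).2]

theorem ForwardSplit.pathFrom_subdivide (hF : ForwardSplit E E₂ a b Out) {l₁ l₂ : List V}
    {w : V} (hw : w ∈ Out) (hp : PathFrom E (l₁ ++ a :: w :: l₂) x y)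
    (hbp : b ∉ l₁ ++ a :: w :: l₂) :
    PathFrom E₂ (l₁ ++ a :: b :: w :: l₂) x y ∧ ∀ e, EdgeOn e.1 e.2 (l₁ ++ a :: w :: l₂) →
      EdgeOn (splitEdge a b Out e).1 (splitEdge a b Out e).2 (l₁ ++ a :: b :: w :: l₂) := by
  have hpE := isChain_iff_forall_edgeOn.1 hp.1.1
  have hp' : ∀ u v, EdgeOn u v (l₁ ++ a :: w :: l₂) ↔
      EdgeOn u v (l₁ ++ [a]) ∨ (u = a ∧ v = w) ∨ EdgeOn u v (w :: l₂) := fun u v => by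
    rw [edgeOn_append_cons, edgeOn_cons_cons]
  have hsrc : ∀ u v, EdgeOn u v (l₁ ++ [a]) ∨ EdgeOn u v (w :: l₂) → u ≠ a := by
    have ha := List.nodup_middle.1 hp.1.2
    simp only [List.nodup_cons, List.mem_append, not_or] at ha
    rintro u v (h | h) rfl
    exacts [ha.1.1 h.mem_of_append_singleton, ha.1.2 h.mem_left]
  refine ⟨⟨⟨isChain_iff_forall_edgeOn.2 fun u v huv => ?_, ?_⟩, by simpa using hp.2.1,
    by simpa using hp.2.2⟩, ?_⟩
  · rcases edgeOn_subdivide.1 huv with h | ⟨rfl, rfl⟩ | ⟨rfl, rfl⟩ | h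
    · exact hF.rel_of_rel (hpE u v ((hp' u v).2 (Or.inl h))) (absurd · (hsrc u v (Or.inl h)))
    · exact (hF.2.2.2.2.2 _ _).2 (Or.inl ⟨rfl, rfl⟩)
    · exact (hF.2.2.2.2.2 _ _).2 (Or.inr (Or.inl ⟨rfl, hw⟩))
    · exact hF.rel_of_rel (hpE u v ((hp' u v).2 (Or.inr (Or.inr h))))
        (absurd · (hsrc u v (Or.inr h)))
  · simpa using (List.nodup_middle (l₁ := l₁ ++ [a])).2
      (List.nodup_cons.2 ⟨by simpa using hbp, by simpa using hp.1.2⟩)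
  · rintro ⟨u, v⟩ huv
    rcases (hp' u v).1 huv with h | ⟨rfl, rfl⟩ | h
    · simpa [splitEdge, hsrc u v (Or.inl h)] using edgeOn_subdivide.2 (Or.inl h)
    · simpa [splitEdge, hw] using edgeOn_subdivide.2 (Or.inr (Or.inr (Or.inl ⟨rfl, rfl⟩)))
    · simpa [splitEdge, hsrc u v (Or.inr h)] using
        edgeOn_subdivide.2 (Or.inr (Or.inr (Or.inr h)))

theorem ForwardSplit.exists_pathFrom_split (hF : ForwardSplit E E₂ a b Out)
    (hp : PathFrom E p x y) (hbp : b ∉ p) :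
    ∃ q, PathFrom E₂ q x y ∧ ∀ e, EdgeOn e.1 e.2 p →
      EdgeOn (splitEdge a b Out e).1 (splitEdge a b Out e).2 q := by
  by_cases h : ∃ w ∈ Out, EdgeOn a w p
  · obtain ⟨w, hw, haw⟩ := h
    obtain ⟨l₁, l₂, rfl⟩ := edgeOn_iff_exists_append.1 haw
    exact ⟨_, hF.pathFrom_subdivide hw hp hbp⟩
  · have hsplit : ∀ u v, EdgeOn u v p → ¬(u = a ∧ v ∈ Out) :=
      fun u v huv ⟨hu, hv⟩ => h ⟨v, hv, hu ▸ huv⟩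
    refine ⟨p, ⟨⟨isChain_iff_forall_edgeOn.2 fun u v huv => ?_, hp.1.2⟩, hp.2⟩, ?_⟩
    · exact hF.rel_of_rel (isChain_iff_forall_edgeOn.1 hp.1.1 u v huv)
        fun hu hv => hsplit u v huv ⟨hu, hv⟩
    · rintro ⟨u, v⟩ huv
      simpa [splitEdge, hsplit u v huv] using huv

end ForwardSplit

section Steps
variable {E E₂ : V → V → Prop} {a b s t : V} {Out In : Set V}

theorem ForwardSplit.widthsLE (hF : ForwardSplit E E₂ a b Out) : WidthsLE s t E E₂ := by
  refine widthsLE_of_map _ hF.injOn_splitEdge (fun C hC ⟨e, he⟩ => ?_)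
    fun hst S ⟨p, hp, hS⟩ => ?_
  · have hst := hC.1.ne
    have hreach : ReflTransGen E s t :=
      ReflTransGen.mono (fun _ _ h => h.1) _ _ ((isMinCut_iff.1 hC).2 e he)
    refine ⟨_, hF.isMinCut_image (fun h => hst ?_) (fun h => hst ?_) hC, subset_rfl⟩
    exacts [hF.eq_of_reflTransGen hreach (Or.inl h.symm),
      hF.eq_of_reflTransGen hreach (Or.inr h.symm)]
  · have hbp : b ∉ p := fun hb => hst <| by
      obtain ⟨hsb, hbt⟩ := hp.reflTransGen_of_mem hb
      exact (hF.eq_of_reflTransGen hsb (Or.inr rfl)).trans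
        (hF.eq_of_reflTransGen hbt (Or.inl rfl))
    obtain ⟨q, hq, hpq⟩ := hF.exists_pathFrom_split hp hbp
    exact ⟨q, hq, by rintro _ ⟨e, he, rfl⟩; exact hpq e (hS e he)⟩

theorem BackwardSplit.flip (hB : BackwardSplit E E₂ a b In) :
    ForwardSplit (flip E) (flip E₂) b a In := by
  obtain ⟨hiso, hab, hIn, hInE, haIn, hE₂⟩ := hB
  refine ⟨fun v => (hiso v).symm, hab.symm, hIn, hInE, haIn, fun u v => ?_⟩
  change E₂ v u ↔ _
  rw [hE₂]
  tauto

theorem BackwardSplit.widthsLE (hB : BackwardSplit E E₂ a b In) : WidthsLE s t E E₂ :=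
  hB.flip.widthsLE.of_flip

theorem DEmbedStep.widthsLE (h : DEmbedStep s t E E₂) : WidthsLE s t E E₂ := by
  rcases h with h | ⟨_, _, _, -, h⟩ | ⟨_, _, _, -, h⟩
  exacts [h.widthsLE, h.widthsLE, h.widthsLE]

end Steps

theorem stmt12_general {V : Type*} (E' E : V → V → Prop) (s t : V)
    (hemb : DEmbedded s t E' E) :
    (∀ S : Finset (V × V), Parallel E' s t ↑S →
      ∃ T : Finset (V × V), Parallel E s t ↑T ∧ S.card ≤ T.card) ∧
    (∀ S : Finset (V × V), Serial E' s t ↑S → Parallel E' s t ↑S →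
      ∃ T : Finset (V × V), Serial E s t ↑T ∧ Parallel E s t ↑T ∧ S.card ≤ T.card) :=
  show WidthsLE s t E' E by
    induction hemb with
    | refl => exact .refl
    | tail _ hstep ih => exact ih.trans hstep.widthsLE

/-- If `G'` is d-embedded in `G`, then `PW(G) ≥ PW(G')` and `SPW(G) ≥ SPW(G')`. -/
theorem stmt12 {V : Type*} (E' E : V → V → Prop) (s t : V)
    (hG' : TwoTerminalE E' s t) (hG : TwoTerminalE E s t)
    (hemb : DEmbedded s t E' E) :
    (∀ S : Finset (V × V), Parallel E' s t ↑S →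
      ∃ T : Finset (V × V), Parallel E s t ↑T ∧ S.card ≤ T.card) ∧
    (∀ S : Finset (V × V), Serial E' s t ↑S → Parallel E' s t ↑S →
      ∃ T : Finset (V × V), Serial E s t ↑T ∧ Parallel E s t ↑T ∧ S.card ≤ T.card) :=
  stmt12_general E' E s t hemb
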